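/- The Equivariant Temporal Module (ETM) layer with forward attention is E(3)-equivariant: let T, N be positive integers, h : Fin N → Fin T → ℝᶜ be per-node, per-frame features, and φ_q, φ_k, φ_v : ℝᶜ → ℝᵈ, φ_x : ℝᵈ → ℝ be arbitrary functions. For each node i and frames t, s with s ≤ t, define the forward attention weights α_i(t,s) = exp(⟨φ_q(h_i(t)), φ_k(h_i(s))⟩) / Σ_{s'=0}^{t} exp(⟨φ_q(h_i(t)), φ_k(h_i(s'))⟩). For a trajectory y : Fin N → Fin T → ℝ³, define the updated features h'_i(t) = h_i(t) + Σ_{s=0}^{t} α_i(t,s) φ_v(h_i(s)) and updated positions y'_i(t) = y_i(t) + Σ_{s=0}^{t} α_i(t,s) · (y_i(t) - y_i(s)) · φ_x(φ_v(h_i(s))). Then for every real orthogonal 3×3 matrix O and every b ∈ ℝ³, applying the layer to the transformed trajectory (i,t) ↦ O·y_i(t) + b leaves h'_i(t) unchanged and produces output positions O·y'_i(t) + b for all i and t. -/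

import Mathlib

open scoped BigOperators

/-! The position update is `y_i(t)` plus a linear combination of displacements `y_i(t) - y_i(s)`
whose coefficients depend on the features only. An affine map sends displacements to their
images under its linear part, and that linear part commutes with the sum, so the update is
equivariant under every affine map of ℝ³, in particular under `y ↦ O·y + b`. -/

/-- The E(3) action `y ↦ O·y + b` on 3-vectors. -/
noncomputable def e3Act (O : Matrix (Fin 3) (Fin 3) ℝ) (b : EuclideanSpace ℝ (Fin 3))
    (v : EuclideanSpace ℝ (Fin 3)) : EuclideanSpace ℝ (Fin 3) :=
  (show EuclideanSpace ℝ (Fin 3) from WithLp.toLp 2 (O.mulVec v)) + b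

/-- Forward attention weights
`α_i(t,s) = exp(⟨φ_q(h_i(t)), φ_k(h_i(s))⟩) / Σ_{s' ≤ t} exp(⟨φ_q(h_i(t)), φ_k(h_i(s'))⟩)`. -/
noncomputable def etmAttn {T N c d : ℕ}
    (φq φk : (Fin c → ℝ) → (Fin d → ℝ))
    (h : Fin N → Fin T → (Fin c → ℝ)) (i : Fin N) (t s : Fin T) : ℝ :=
  Real.exp (∑ a, φq (h i t) a * φk (h i s) a) /
    ∑ s' ∈ Finset.Iic t, Real.exp (∑ a, φq (h i t) a * φk (h i s') a)

/-- ETM feature update `h'_i(t) = h_i(t) + Σ_{s ≤ t} α_i(t,s) φ_v(h_i(s))`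
(computed from the features `h` only; the positions `y` enter trivially).
The value space coincides with the feature space so that the residual addition
is well defined. -/
noncomputable def etmFeat {T N c d : ℕ}
    (φq φk : (Fin c → ℝ) → (Fin d → ℝ)) (φv : (Fin c → ℝ) → (Fin c → ℝ))
    (h : Fin N → Fin T → (Fin c → ℝ))
    (_y : Fin N → Fin T → EuclideanSpace ℝ (Fin 3))
    (i : Fin N) (t : Fin T) : Fin c → ℝ :=
  h i t + ∑ s ∈ Finset.Iic t, etmAttn φq φk h i t s • φv (h i s)

/-- ETM position update
`y'_i(t) = y_i(t) + Σ_{s ≤ t} α_i(t,s) · (y_i(t) - y_i(s)) · φ_x(φ_v(h_i(s)))`. -/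
noncomputable def etmPos {T N c d : ℕ}
    (φq φk : (Fin c → ℝ) → (Fin d → ℝ)) (φv : (Fin c → ℝ) → (Fin c → ℝ))
    (φx : (Fin c → ℝ) → ℝ)
    (h : Fin N → Fin T → (Fin c → ℝ))
    (y : Fin N → Fin T → EuclideanSpace ℝ (Fin 3))
    (i : Fin N) (t : Fin T) : EuclideanSpace ℝ (Fin 3) :=
  y i t + ∑ s ∈ Finset.Iic t,
    (etmAttn φq φk h i t s * φx (φv (h i s))) • (y i t - y i s)

section

variable {T N c d : ℕ} (φq φk : (Fin c → ℝ) → (Fin d → ℝ)) (φv : (Fin c → ℝ) → (Fin c → ℝ))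
  (h : Fin N → Fin T → (Fin c → ℝ))

theorem etmFeat_eq_of_positions (y y' : Fin N → Fin T → EuclideanSpace ℝ (Fin 3))
    (i : Fin N) (t : Fin T) : etmFeat φq φk φv h y' i t = etmFeat φq φk φv h y i t :=
  rfl

theorem etmPos_comp_affineMap (φx : (Fin c → ℝ) → ℝ)
    (f : EuclideanSpace ℝ (Fin 3) →ᵃ[ℝ] EuclideanSpace ℝ (Fin 3))
    (y : Fin N → Fin T → EuclideanSpace ℝ (Fin 3)) (i : Fin N) (t : Fin T) :
    etmPos φq φk φv φx h (fun j s => f (y j s)) i t = f (etmPos φq φk φv φx h y i t) := by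
  have displacement (u v : EuclideanSpace ℝ (Fin 3)) : f u - f v = f.linear (u - v) :=
    (f.linearMap_vsub u v).symm
  simp only [etmPos, displacement, ← map_smul, ← map_sum]
  rw [add_comm (y i t), add_comm (f (y i t))]
  exact (f.map_vadd (y i t) _).symm

end

noncomputable def e3AffineMap (O : Matrix (Fin 3) (Fin 3) ℝ) (b : EuclideanSpace ℝ (Fin 3)) :
    EuclideanSpace ℝ (Fin 3) →ᵃ[ℝ] EuclideanSpace ℝ (Fin 3) :=
  (Matrix.toEuclideanLin O).toAffineMap + AffineMap.const ℝ _ b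

theorem coe_e3AffineMap (O : Matrix (Fin 3) (Fin 3) ℝ) (b : EuclideanSpace ℝ (Fin 3)) :
    ⇑(e3AffineMap O b) = e3Act O b :=
  rfl

theorem etm_E3_equivariant_general (T N c d : ℕ)
    (φq φk : (Fin c → ℝ) → (Fin d → ℝ)) (φv : (Fin c → ℝ) → (Fin c → ℝ))
    (φx : (Fin c → ℝ) → ℝ)
    (h : Fin N → Fin T → (Fin c → ℝ))
    (y : Fin N → Fin T → EuclideanSpace ℝ (Fin 3))
    (O : Matrix (Fin 3) (Fin 3) ℝ)
    (b : EuclideanSpace ℝ (Fin 3)) :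
    (∀ (i : Fin N) (t : Fin T),
        etmFeat φq φk φv h (fun j s => e3Act O b (y j s)) i t = etmFeat φq φk φv h y i t) ∧
      (∀ (i : Fin N) (t : Fin T),
        etmPos φq φk φv φx h (fun j s => e3Act O b (y j s)) i t =
          e3Act O b (etmPos φq φk φv φx h y i t)) := by
  refine ⟨etmFeat_eq_of_positions φq φk φv h y _, fun i t => ?_⟩
  rw [← coe_e3AffineMap]
  exact etmPos_comp_affineMap φq φk φv h φx (e3AffineMap O b) y i t

/-- The Equivariant Temporal Module (ETM) layer with forward attention is
E(3)-equivariant: applying the layer to the transformed trajectory `(i,t) ↦ O·y_i(t) + b`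
leaves the updated features unchanged and transforms the updated positions by the same
`O, b`, for all nodes `i` and frames `t`. -/
theorem etm_E3_equivariant (T N c d : ℕ) (hT : 0 < T) (hN : 0 < N)
    (φq φk : (Fin c → ℝ) → (Fin d → ℝ)) (φv : (Fin c → ℝ) → (Fin c → ℝ))
    (φx : (Fin c → ℝ) → ℝ)
    (h : Fin N → Fin T → (Fin c → ℝ))
    (y : Fin N → Fin T → EuclideanSpace ℝ (Fin 3))
    (O : Matrix (Fin 3) (Fin 3) ℝ) (hO : O ∈ Matrix.orthogonalGroup (Fin 3) ℝ)
    (b : EuclideanSpace ℝ (Fin 3)) :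
    (∀ (i : Fin N) (t : Fin T),
        etmFeat φq φk φv h (fun j s => e3Act O b (y j s)) i t = etmFeat φq φk φv h y i t) ∧
      (∀ (i : Fin N) (t : Fin T),
        etmPos φq φk φv φx h (fun j s => e3Act O b (y j s)) i t =
          e3Act O b (etmPos φq φk φv φx h y i t)) :=
  etm_E3_equivariant_general T N c d φq φk φv φx h y O b
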